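/- Let j ≥ 0 and let g_0, g_1, …, g_j be real numbers with g_j > g_{j-1} > … > g_0 > 0, and set g_{-1} = 0 in the case j = 0. Then for any real numbers v^0, v^1, …, v^{j+1}, setting Δv = Σ_{s=0}^{j} g_s (v^{s+1} − v^s) and Δ(v²) = Σ_{s=0}^{j} g_s ((v^{s+1})² − (v^s)²), one has v^{j} · Δv ≥ (1/2) Δ(v²) − (1/(2 (g_j − g_{j-1}))) (Δv)². -/

import Mathlib

/-!
Write `Φₙ = 2 vⁿ Δₙv - Δₙ(v²)`, where `Δₙ` sums the first `n` terms. Appending the term of index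
`n` increases `Φ` and `(Δv)² / gₙ` by the same amount, so monotonicity of the weights gives
`(Δₙ₊₁v)² / gₙ ≤ Φₙ₊₁` by induction. Keeping the multiplier `vʲ` while appending the term of
index `j` instead lowers `Φⱼ` by `gⱼ (vʲ⁺¹ - vʲ)² = (Δⱼ₊₁v - Δⱼv)² / gⱼ`. Sedrakyan's inequality
`(x + y)² / (p + c) ≤ x² / p + y² / c` with `p = gⱼ₋₁`, `c = gⱼ - gⱼ₋₁` bounds this loss by
`(Δⱼv)² / gⱼ₋₁ ≤ Φⱼ` plus `(Δⱼ₊₁v)² / (gⱼ - gⱼ₋₁)`.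
-/

open Finset

-- `discreteFracDeriv g v (j + 1)` is the `Δv` of the statement, with terms `s = 0, …, j`.
def discreteFracDeriv (g v : ℕ → ℝ) (n : ℕ) : ℝ :=
  ∑ s ∈ range n, g s * (v (s + 1) - v s)

section

variable (g v : ℕ → ℝ) (n : ℕ)

@[simp]
theorem discreteFracDeriv_zero : discreteFracDeriv g v 0 = 0 := rfl

theorem discreteFracDeriv_succ :
    discreteFracDeriv g v (n + 1) = discreteFracDeriv g v n + g n * (v (n + 1) - v n) :=
  sum_range_succ ..

theorem two_mul_discreteFracDeriv_sub_succ (x : ℝ) :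
    2 * x * discreteFracDeriv g v (n + 1) - discreteFracDeriv g (v ^ 2) (n + 1) =
      2 * x * discreteFracDeriv g v n - discreteFracDeriv g (v ^ 2) n
        + g n * ((2 * x - v n - v (n + 1)) * (v (n + 1) - v n)) := by
  simp only [discreteFracDeriv_succ, Pi.pow_apply]
  ring

end

theorem sq_add_div_add_le {x y p c : ℝ} (hp : 0 < p) (hc : 0 < c) :
    (x + y) ^ 2 / (p + c) ≤ x ^ 2 / p + y ^ 2 / c := by
  simpa [Fin.sum_univ_two] using
    sq_sum_div_le_sum_sq_div univ ![x, y] (g := ![p, c]) (by simp [Fin.forall_fin_two, hp, hc])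

theorem sq_discreteFracDeriv_div_le {g : ℕ → ℝ} (v : ℕ → ℝ) {n : ℕ} (hg0 : 0 < g 0)
    (hg : MonotoneOn g (Set.Iic n)) :
    discreteFracDeriv g v (n + 1) ^ 2 / g n ≤
      2 * v (n + 1) * discreteFracDeriv g v (n + 1) - discreteFracDeriv g (v ^ 2) (n + 1) := by
  have hstep : ∀ m, g m ≠ 0 →
      2 * v (m + 1) * discreteFracDeriv g v (m + 1) - discreteFracDeriv g (v ^ 2) (m + 1)
          - discreteFracDeriv g v (m + 1) ^ 2 / g m =
        2 * v m * discreteFracDeriv g v m - discreteFracDeriv g (v ^ 2) m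
          - discreteFracDeriv g v m ^ 2 / g m := by
    intro m hm
    rw [two_mul_discreteFracDeriv_sub_succ, discreteFracDeriv_succ g v m]
    field_simp
    ring
  have hpos : ∀ m ≤ n, 0 < g m := fun m hm =>
    hg0.trans_le (hg (by simp) (Set.mem_Iic.2 hm) m.zero_le)
  rw [← sub_nonneg, hstep n (hpos n le_rfl).ne']
  induction n with
  | zero => simp
  | succ n ih =>
    have hanti : discreteFracDeriv g v (n + 1) ^ 2 / g (n + 1) ≤
        discreteFracDeriv g v (n + 1) ^ 2 / g n :=
      div_le_div_of_nonneg_left (sq_nonneg _) (hpos n n.le_succ)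
        (hg (Set.mem_Iic.2 n.le_succ) (Set.mem_Iic.2 le_rfl) n.le_succ)
    have hprev : 0 ≤ 2 * v (n + 1) * discreteFracDeriv g v (n + 1)
        - discreteFracDeriv g (v ^ 2) (n + 1) - discreteFracDeriv g v (n + 1) ^ 2 / g n := by
      rw [hstep n (hpos n n.le_succ).ne']
      exact ih (hg.mono (Set.Iic_subset_Iic.2 n.le_succ)) fun m hm =>
        hpos m (hm.trans n.le_succ)
    linarith

theorem neg_sq_discreteFracDeriv_div_le {g : ℕ → ℝ} (v : ℕ → ℝ) {n : ℕ}
    (hg0 : 0 < g 0) (hg : StrictMonoOn g (Set.Iic (n + 1))) :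
    -(discreteFracDeriv g v (n + 2) ^ 2 / (g (n + 1) - g n)) ≤
      2 * v (n + 1) * discreteFracDeriv g v (n + 2) - discreteFracDeriv g (v ^ 2) (n + 2) := by
  set a := discreteFracDeriv g v (n + 1)
  set d := discreteFracDeriv g v (n + 2)
  have hgn : 0 < g n := hg0.trans_le (hg.monotoneOn (by simp) (by simp) n.zero_le)
  have hgn1 : g n < g (n + 1) := hg (by simp) (by simp) n.lt_succ_self
  have hd : d - a = g (n + 1) * (v (n + 2) - v (n + 1)) :=
    sub_eq_iff_eq_add'.2 (discreteFracDeriv_succ g v (n + 1))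
  calc -(d ^ 2 / (g (n + 1) - g n))
      ≤ a ^ 2 / g n - (d - a) ^ 2 / g (n + 1) := by
        have := sq_add_div_add_le (x := -a) (y := d) hgn (sub_pos.2 hgn1)
        rw [neg_add_eq_sub, add_sub_cancel, neg_sq] at this
        linarith
    _ ≤ 2 * v (n + 1) * a - discreteFracDeriv g (v ^ 2) (n + 1)
          - g (n + 1) * (v (n + 2) - v (n + 1)) ^ 2 := by
        have hcancel : (d - a) ^ 2 / g (n + 1) = g (n + 1) * (v (n + 2) - v (n + 1)) ^ 2 := by
          rw [hd]
          field_simp [(hgn.trans hgn1).ne']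
        rw [hcancel]
        gcongr
        exact sq_discreteFracDeriv_div_le v hg0
          (hg.monotoneOn.mono (Set.Iic_subset_Iic.2 n.le_succ))
    _ = 2 * v (n + 1) * d - discreteFracDeriv g (v ^ 2) (n + 2) := by
        rw [two_mul_discreteFracDeriv_sub_succ g v (n + 1)]
        ring

theorem lemma1_second_inequality (j : ℕ) (g v : ℕ → ℝ)
    (hg0 : 0 < g 0) (hgmono : ∀ s, s < j → g s < g (s + 1)) :
    v j * (∑ s ∈ Finset.range (j + 1), g s * (v (s + 1) - v s)) ≥
      (1 / 2) * (∑ s ∈ Finset.range (j + 1), g s * ((v (s + 1)) ^ 2 - (v s) ^ 2)) -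
        (1 / (2 * (g j - if j = 0 then 0 else g (j - 1)))) *
          (∑ s ∈ Finset.range (j + 1), g s * (v (s + 1) - v s)) ^ 2 := by
  show v j * discreteFracDeriv g v (j + 1) ≥ 1 / 2 * discreteFracDeriv g (v ^ 2) (j + 1) -
    1 / (2 * (g j - if j = 0 then 0 else g (j - 1))) * discreteFracDeriv g v (j + 1) ^ 2
  rcases j with _ | j
  · refine le_of_eq ?_
    simp only [zero_add, discreteFracDeriv_succ, discreteFracDeriv_zero, if_pos, sub_zero,
      Pi.pow_apply]
    field_simp
    ring
  · have := neg_sq_discreteFracDeriv_div_le v hg0 (strictMonoOn_Iic_of_lt_succ hgmono)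
    have hdiv : 1 / (2 * (g (j + 1) - g j)) * discreteFracDeriv g v (j + 2) ^ 2
        = discreteFracDeriv g v (j + 2) ^ 2 / (g (j + 1) - g j) / 2 := by
      rw [one_div_mul_eq_div, div_div, mul_comm]
    simp only [if_neg j.succ_ne_zero, Nat.add_sub_cancel]
    linarith
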